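/- arXiv:0806.3898 — 2 statements merged into one kernel-verified Lean document; each statement's English description precedes it below -/
import Mathlib

section
/- Let Θ be a twisted partial action of a group G on a k-algebra A. Then for all g in G and a in D_{g⁻¹}: θ_g(w_{g⁻¹,g} · a) = w_{g,g⁻¹} · θ_g(a). -/
/-- The additive subgroup generated by products of elements of `S` and `T`. -/
def setMul {A : Type} [NonUnitalRing A] (S T : AddSubgroup A) : AddSubgroup A :=
  AddSubgroup.closure (Set.image2 (· * ·) (S : Set A) (T : Set A))

/-- A twisted partial action of a group `G` on a (non-necessarily unital)
`k`-algebra `A` (Definition 2.1 of the paper).  The family `D g` consists of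
idempotent, pairwise commuting two-sided ideals, `θ g : D g⁻¹ → D g` are
`k`-algebra isomorphisms (with inverses `θinv g`), and `(wL g h, wR g h)` is an
invertible multiplier of `D g · D (g*h)` (with inverse `(winvL g h, winvR g h)`). -/
structure TwistedPartialAction (k : Type) [CommRing k] (G : Type) [Group G]
    (A : Type) [NonUnitalRing A] [Module k A] where
  D : G → AddSubgroup A
  mul_mem_left : ∀ g (a x : A), x ∈ D g → a * x ∈ D g
  mul_mem_right : ∀ g (a x : A), x ∈ D g → x * a ∈ D g
  smul_mem : ∀ g (c : k) (x : A), x ∈ D g → c • x ∈ D g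
  idem : ∀ g, setMul (D g) (D g) = D g
  commute : ∀ g h, setMul (D g) (D h) = setMul (D h) (D g)
  θ : G → A → A
  θinv : G → A → A
  D_one : D 1 = ⊤
  θ_one : ∀ a : A, θ 1 a = a
  θ_mem : ∀ g a, a ∈ D g⁻¹ → θ g a ∈ D g
  θinv_mem : ∀ g a, a ∈ D g → θinv g a ∈ D g⁻¹
  θ_add : ∀ g a b, a ∈ D g⁻¹ → b ∈ D g⁻¹ → θ g (a + b) = θ g a + θ g b
  θ_smul : ∀ g (c : k) a, a ∈ D g⁻¹ → θ g (c • a) = c • θ g a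
  θ_mul : ∀ g a b, a ∈ D g⁻¹ → b ∈ D g⁻¹ → θ g (a * b) = θ g a * θ g b
  θ_left_inv : ∀ g a, a ∈ D g⁻¹ → θinv g (θ g a) = a
  θ_right_inv : ∀ g a, a ∈ D g → θ g (θinv g a) = a
  θ_image : ∀ g h, θ g '' (setMul (D g⁻¹) (D h) : Set A) = (setMul (D g) (D (g * h)) : Set A)
  wL : G → G → A → A
  wR : G → G → A → A
  winvL : G → G → A → A
  winvR : G → G → A → A
  wL_mem : ∀ g h x, x ∈ setMul (D g) (D (g * h)) → wL g h x ∈ setMul (D g) (D (g * h))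
  wR_mem : ∀ g h x, x ∈ setMul (D g) (D (g * h)) → wR g h x ∈ setMul (D g) (D (g * h))
  winvL_mem : ∀ g h x, x ∈ setMul (D g) (D (g * h)) → winvL g h x ∈ setMul (D g) (D (g * h))
  winvR_mem : ∀ g h x, x ∈ setMul (D g) (D (g * h)) → winvR g h x ∈ setMul (D g) (D (g * h))
  wL_add : ∀ g h x y, x ∈ setMul (D g) (D (g * h)) → y ∈ setMul (D g) (D (g * h)) →
    wL g h (x + y) = wL g h x + wL g h y
  wR_add : ∀ g h x y, x ∈ setMul (D g) (D (g * h)) → y ∈ setMul (D g) (D (g * h)) →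
    wR g h (x + y) = wR g h x + wR g h y
  winvL_add : ∀ g h x y, x ∈ setMul (D g) (D (g * h)) → y ∈ setMul (D g) (D (g * h)) →
    winvL g h (x + y) = winvL g h x + winvL g h y
  winvR_add : ∀ g h x y, x ∈ setMul (D g) (D (g * h)) → y ∈ setMul (D g) (D (g * h)) →
    winvR g h (x + y) = winvR g h x + winvR g h y
  wL_mul : ∀ g h x y, x ∈ setMul (D g) (D (g * h)) → y ∈ setMul (D g) (D (g * h)) →
    wL g h (x * y) = wL g h x * y
  wR_mul : ∀ g h x y, x ∈ setMul (D g) (D (g * h)) → y ∈ setMul (D g) (D (g * h)) →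
    wR g h (x * y) = x * wR g h y
  w_compat : ∀ g h x y, x ∈ setMul (D g) (D (g * h)) → y ∈ setMul (D g) (D (g * h)) →
    wR g h x * y = x * wL g h y
  winvL_mul : ∀ g h x y, x ∈ setMul (D g) (D (g * h)) → y ∈ setMul (D g) (D (g * h)) →
    winvL g h (x * y) = winvL g h x * y
  winvR_mul : ∀ g h x y, x ∈ setMul (D g) (D (g * h)) → y ∈ setMul (D g) (D (g * h)) →
    winvR g h (x * y) = x * winvR g h y
  winv_compat : ∀ g h x y, x ∈ setMul (D g) (D (g * h)) → y ∈ setMul (D g) (D (g * h)) →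
    winvR g h x * y = x * winvL g h y
  wL_inv : ∀ g h x, x ∈ setMul (D g) (D (g * h)) → winvL g h (wL g h x) = x
  wL_inv' : ∀ g h x, x ∈ setMul (D g) (D (g * h)) → wL g h (winvL g h x) = x
  wR_inv : ∀ g h x, x ∈ setMul (D g) (D (g * h)) → winvR g h (wR g h x) = x
  wR_inv' : ∀ g h x, x ∈ setMul (D g) (D (g * h)) → wR g h (winvR g h x) = x
  w_one_left : ∀ g x, x ∈ D g → wL 1 g x = x ∧ wR 1 g x = x
  w_one_right : ∀ g x, x ∈ D g → wL g 1 x = x ∧ wR g 1 x = x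
  θ_comp : ∀ g h a, a ∈ setMul (D h⁻¹) (D (h⁻¹ * g⁻¹)) →
    θ g (θ h a) = winvR g h (wL g h (θ (g * h) a))
  cocycle : ∀ g h t a, a ∈ setMul (setMul (D g⁻¹) (D h)) (D (h * t)) →
    wR g (h * t) (θ g (wR h t a)) = wR (g * h) t (wR g h (θ g a))

/-!
Applying the twisted composition rule `θ_g ∘ θ_h = w_{g,h} θ_{gh}(·) w_{g,h}⁻¹` twice, to the
pairs `(g⁻¹, g)` and `(g, g⁻¹)`, gives `θ_g(w_{g⁻¹,g} a w_{g⁻¹,g}⁻¹) = w_{g,g⁻¹} θ_g(a) w_{g,g⁻¹}⁻¹`.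
The cocycle identity at `(g, g⁻¹, g)`, in which `w_{g,1}` and `w_{1,g}` are trivial, says that
`θ_g` intertwines right multiplication by `w_{g⁻¹,g}` with right multiplication by `w_{g,g⁻¹}`.
Cancelling the right multipliers leaves the claimed identity for the left ones.
-/

namespace TwistedPartialAction

variable {k G A : Type} [CommRing k] [Group G] [NonUnitalRing A] [Module k A]
  (Θ : TwistedPartialAction k G A)

theorem setMul_D_one (s : G) : setMul (Θ.D s) (Θ.D 1) = Θ.D s := by
  refine le_antisymm ((AddSubgroup.closure_le _).mpr ?_) ?_
  · rintro _ ⟨x, hx, y, -, rfl⟩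
    exact Θ.mul_mem_right s y x hx
  · conv_lhs => rw [← Θ.idem s]
    exact AddSubgroup.closure_mono
      (Set.image2_subset subset_rfl (by rw [Θ.D_one]; exact Set.subset_univ _))

theorem setMul_D_mul_inv_cancel (g : G) : setMul (Θ.D g) (Θ.D (g * g⁻¹)) = Θ.D g := by
  rw [mul_inv_cancel, setMul_D_one]

theorem setMul_D_inv_mul_cancel (g : G) : setMul (Θ.D g⁻¹) (Θ.D (g⁻¹ * g)) = Θ.D g⁻¹ := by
  rw [inv_mul_cancel, setMul_D_one]

theorem θ_inv_θ {g : G} {a : A} (ha : a ∈ Θ.D g⁻¹) :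
    Θ.θ g⁻¹ (Θ.θ g a) = Θ.winvR g⁻¹ g (Θ.wL g⁻¹ g a) := by
  have hcomp := Θ.θ_comp g⁻¹ g a (by rwa [inv_inv, setMul_D_inv_mul_cancel])
  rwa [inv_mul_cancel, θ_one] at hcomp

theorem θ_θ_inv {g : G} {b : A} (hb : b ∈ Θ.D g) :
    Θ.θ g (Θ.θ g⁻¹ b) = Θ.winvR g g⁻¹ (Θ.wL g g⁻¹ b) := by
  simpa only [inv_inv] using Θ.θ_inv_θ (g := g⁻¹) (by rwa [inv_inv])

theorem θ_wR_inv_mul {g : G} {a : A} (ha : a ∈ Θ.D g⁻¹) :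
    Θ.θ g (Θ.wR g⁻¹ g a) = Θ.wR g g⁻¹ (Θ.θ g a) := by
  have ha' : a ∈ setMul (Θ.D g⁻¹) (Θ.D (g⁻¹ * g)) := by rwa [setMul_D_inv_mul_cancel]
  have hcocycle := Θ.cocycle g g⁻¹ g a (by rwa [Θ.idem])
  have hθwR : Θ.θ g (Θ.wR g⁻¹ g a) ∈ Θ.D g :=
    Θ.θ_mem g _ (Θ.setMul_D_inv_mul_cancel g ▸ Θ.wR_mem _ _ _ ha')
  have hθa : Θ.θ g a ∈ setMul (Θ.D g) (Θ.D (g * g⁻¹)) := by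
    rw [setMul_D_mul_inv_cancel]; exact Θ.θ_mem g a ha
  have hwRθ : Θ.wR g g⁻¹ (Θ.θ g a) ∈ Θ.D g :=
    Θ.setMul_D_mul_inv_cancel g ▸ Θ.wR_mem _ _ _ hθa
  rwa [inv_mul_cancel, mul_inv_cancel, (Θ.w_one_right g _ hθwR).2,
    (Θ.w_one_left g _ hwRθ).2] at hcocycle

end TwistedPartialAction

/-- for a twisted partial action `Θ` of `G` on `A`,
`θ_g(w_{g⁻¹,g} · a) = w_{g,g⁻¹} · θ_g(a)` for all `g ∈ G`, `a ∈ D_{g⁻¹}`. -/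
theorem twistedPartialAction_wL_compat {k G A : Type} [CommRing k] [Group G]
    [NonUnitalRing A] [Module k A]
    (Θ : TwistedPartialAction k G A) (g : G) (a : A) (ha : a ∈ Θ.D g⁻¹) :
    Θ.θ g (Θ.wL g⁻¹ g a) = Θ.wL g g⁻¹ (Θ.θ g a) := by
  have ha' : a ∈ setMul (Θ.D g⁻¹) (Θ.D (g⁻¹ * g)) := by rwa [Θ.setMul_D_inv_mul_cancel]
  have hθa : Θ.θ g a ∈ setMul (Θ.D g) (Θ.D (g * g⁻¹)) := by
    rw [Θ.setMul_D_mul_inv_cancel]; exact Θ.θ_mem g a ha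
  have hwL : Θ.wL g⁻¹ g a ∈ setMul (Θ.D g⁻¹) (Θ.D (g⁻¹ * g)) := Θ.wL_mem _ _ _ ha'
  have hconj : Θ.winvR g⁻¹ g (Θ.wL g⁻¹ g a) ∈ Θ.D g⁻¹ :=
    Θ.setMul_D_inv_mul_cancel g ▸ Θ.winvR_mem _ _ _ hwL
  calc Θ.θ g (Θ.wL g⁻¹ g a)
      = Θ.θ g (Θ.wR g⁻¹ g (Θ.winvR g⁻¹ g (Θ.wL g⁻¹ g a))) := by rw [Θ.wR_inv' _ _ _ hwL]
    _ = Θ.wR g g⁻¹ (Θ.θ g (Θ.θ g⁻¹ (Θ.θ g a))) := by rw [Θ.θ_wR_inv_mul hconj, Θ.θ_inv_θ ha]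
    _ = Θ.wL g g⁻¹ (Θ.θ g a) := by
      rw [Θ.θ_θ_inv (Θ.θ_mem g a ha), Θ.wR_inv' _ _ _ (Θ.wL_mem _ _ _ hθa)]
end

section
/- Let (R, R', M, M', τ, τ') be a Morita context with s-unital R and R', surjective τ, τ', M'R = R'M' = M' and MR' = RM = M. Then the linking algebra C has multipliers u, v with uv = e₁₁ and vu = e₂₂ if and only if there exist a left R-module isomorphism ψ : R → M and a right R'-module isomorphism ψ' : R' → M such that (rψ)r' = r(ψ'r') for all r ∈ R, r' ∈ R'. -/
/-- A Morita context `(R, R', M, M', τ, τ')` between (non-necessarily unital)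
rings `R` and `R'`:  `M` is an `(R,R')`-bimodule, `M'` an `(R',R)`-bimodule,
and `p`/`p'` are the balanced biadditive pairings induced by
`τ : M ⊗_{R'} M' → R` and `τ' : M' ⊗_R M → R'`, satisfying the mixed
associativity conditions. -/
structure MoritaContext (R R' M M' : Type) [NonUnitalRing R] [NonUnitalRing R']
    [AddCommGroup M] [AddCommGroup M'] where
  sRM : R → M → M
  sMR : M → R' → M
  sRM' : R' → M' → M'
  sMR' : M' → R → M'
  p : M → M' → R
  p' : M' → M → R'
  sRM_add_left : ∀ (r s : R) (m : M), sRM (r + s) m = sRM r m + sRM s m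
  sRM_add_right : ∀ (r : R) (m n : M), sRM r (m + n) = sRM r m + sRM r n
  sMR_add_left : ∀ (m n : M) (r' : R'), sMR (m + n) r' = sMR m r' + sMR n r'
  sMR_add_right : ∀ (m : M) (r' s' : R'), sMR m (r' + s') = sMR m r' + sMR m s'
  sRM'_add_left : ∀ (r' s' : R') (m' : M'), sRM' (r' + s') m' = sRM' r' m' + sRM' s' m'
  sRM'_add_right : ∀ (r' : R') (m' n' : M'), sRM' r' (m' + n') = sRM' r' m' + sRM' r' n'
  sMR'_add_left : ∀ (m' n' : M') (r : R), sMR' (m' + n') r = sMR' m' r + sMR' n' r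
  sMR'_add_right : ∀ (m' : M') (r s : R), sMR' m' (r + s) = sMR' m' r + sMR' m' s
  p_add_left : ∀ (m n : M) (m' : M'), p (m + n) m' = p m m' + p n m'
  p_add_right : ∀ (m : M) (m' n' : M'), p m (m' + n') = p m m' + p m n'
  p'_add_left : ∀ (m' n' : M') (m : M), p' (m' + n') m = p' m' m + p' n' m
  p'_add_right : ∀ (m' : M') (m n : M), p' m' (m + n) = p' m' m + p' m' n
  sRM_mul : ∀ (r s : R) (m : M), sRM (r * s) m = sRM r (sRM s m)
  sMR_mul : ∀ (m : M) (r' s' : R'), sMR (sMR m r') s' = sMR m (r' * s')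
  bimod_M : ∀ (r : R) (m : M) (r' : R'), sMR (sRM r m) r' = sRM r (sMR m r')
  sRM'_mul : ∀ (r' s' : R') (m' : M'), sRM' (r' * s') m' = sRM' r' (sRM' s' m')
  sMR'_mul : ∀ (m' : M') (r s : R), sMR' (sMR' m' r) s = sMR' m' (r * s)
  bimod_M' : ∀ (r' : R') (m' : M') (r : R), sMR' (sRM' r' m') r = sRM' r' (sMR' m' r)
  p_left : ∀ (r : R) (m : M) (m' : M'), p (sRM r m) m' = r * p m m'
  p_right : ∀ (m : M) (m' : M') (r : R), p m (sMR' m' r) = p m m' * r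
  p_balanced : ∀ (m : M) (r' : R') (m' : M'), p (sMR m r') m' = p m (sRM' r' m')
  p'_left : ∀ (r' : R') (m' : M') (m : M), p' (sRM' r' m') m = r' * p' m' m
  p'_right : ∀ (m' : M') (m : M) (r' : R'), p' m' (sMR m r') = p' m' m * r'
  p'_balanced : ∀ (m' : M') (r : R) (m : M), p' (sMR' m' r) m = p' m' (sRM r m)
  assoc₁ : ∀ (m₁ : M) (m' : M') (m₂ : M), sRM (p m₁ m') m₂ = sMR m₁ (p' m' m₂)
  assoc₂ : ∀ (m'₁ : M') (m : M) (m'₂ : M'), sRM' (p' m'₁ m) m'₂ = sMR' m'₁ (p m m'₂)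

variable {R R' M M' : Type} [NonUnitalRing R] [NonUnitalRing R']
  [AddCommGroup M] [AddCommGroup M']

/-- The multiplication of the linking algebra `C = [[R, M], [M', R']]` of a
Morita context, an element `[[r, m], [m', r']]` being encoded as the tuple
`(r, m, m', r')`. -/
def lmul (c : MoritaContext R R' M M') (x y : R × M × M' × R') : R × M × M' × R' :=
  (x.1 * y.1 + c.p x.2.1 y.2.2.1,
   c.sRM x.1 y.2.1 + c.sMR x.2.1 y.2.2.2,
   c.sMR' x.2.2.1 y.1 + c.sRM' x.2.2.2 y.2.2.1,
   c.p' x.2.2.1 y.2.1 + x.2.2.2 * y.2.2.2)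

/-- A multiplier `(L, Rm)` of the linking algebra `C` of a Morita context. -/
structure CMult (c : MoritaContext R R' M M') where
  L : R × M × M' × R' → R × M × M' × R'
  Rm : R × M × M' × R' → R × M × M' × R'
  L_add : ∀ x y, L (x + y) = L x + L y
  R_add : ∀ x y, Rm (x + y) = Rm x + Rm y
  L_mul : ∀ x y, L (lmul c x y) = lmul c (L x) y
  R_mul : ∀ x y, Rm (lmul c x y) = lmul c x (Rm y)
  compat : ∀ x y, lmul c (Rm x) y = lmul c x (L y)

/-- Left action of the corner multiplier `e₁₁` on the linking algebra. -/
def e11L (x : R × M × M' × R') : R × M × M' × R' := (x.1, x.2.1, 0, 0)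

/-- Right action of the corner multiplier `e₁₁` on the linking algebra. -/
def e11R (x : R × M × M' × R') : R × M × M' × R' := (x.1, 0, x.2.2.1, 0)

/-- Left action of the corner multiplier `e₂₂` on the linking algebra. -/
def e22L (x : R × M × M' × R') : R × M × M' × R' := (0, 0, x.2.2.1, x.2.2.2)

/-- Right action of the corner multiplier `e₂₂` on the linking algebra. -/
def e22R (x : R × M × M' × R') : R × M × M' × R' := (0, x.2.1, 0, x.2.2.2)

/-- `u·v = e₁₁` and `v·u = e₂₂` in the multiplier algebra of the linking
algebra (recall `L_{uv} = L_u ∘ L_v` and `R_{uv} = R_v ∘ R_u`). -/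
def CornerUV (c : MoritaContext R R' M M') (u v : CMult c) : Prop :=
  (∀ x, u.L (v.L x) = e11L x) ∧ (∀ x, v.Rm (u.Rm x) = e11R x) ∧
  (∀ x, v.L (u.L x) = e22L x) ∧ (∀ x, u.Rm (v.Rm x) = e22R x)

/-- The linking algebra is idempotent: `C·C = C`. -/
def LinkIdem (c : MoritaContext R R' M M') : Prop :=
  AddSubgroup.closure
    (Set.image2 (lmul c) (Set.univ : Set (R × M × M' × R')) Set.univ) = ⊤

/-!
If `uv = e₁₁` and `vu = e₂₂`, then `ψ r` and `ψ' r'` are the `M`-entries of `r·u` and `u·r'`,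
and their inverses are read off from `m·v` and `v·m`. The identities `uv = e₁₁`, `vu = e₂₂` push
`r·u`, `u·r'`, `m·v`, `v·m` into single corners of the linking algebra `C` (up to one entry,
which is killed by s-unitality or by `M = RM`), and this makes the maps mutually inverse.

Conversely take `u = [[0, ψ], [0, 0]]` and `v = [[0, 0], [ψ⁻¹, 0]]`. For them to act on the
`M'`-corner one needs `κ : M' → R'` (`m' ↦ m'ψ`) and `ε : R' → M'` (`r' ↦ r'ψ⁻¹`). These exist
because `M' = M'R` and `R' = τ'(M' ⊗ M)`, and are unique because `R'` and `M'` are faithful.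
Under the hypotheses `C` has no nonzero left or right annihilator, so a pair `(L, R)` that
satisfies only the compatibility `(xR)y = x(Ly)` is already a multiplier.
-/

theorem map_eq_zero_of_closure_eq_top {G N : Type} [AddGroup G] [AddGroup N] {k : Set G}
    (hk : AddSubgroup.closure k = ⊤) {f : G → N} (hf : ∀ a b, f (a + b) = f a + f b)
    (h : ∀ x ∈ k, f x = 0) (x : G) : f x = 0 :=
  DFunLike.congr_fun
    (AddMonoidHom.eq_of_eqOn_dense hk (f := AddMonoidHom.mk' f hf) (g := 0) h) x

theorem eq_zero_of_forall_mul_left_eq_zero {S : Type} [Mul S] [Zero S]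
    (hS : ∀ r : S, ∃ y, y * r = r) {a : S} (h : ∀ s, s * a = 0) : a = 0 := by
  obtain ⟨y, hy⟩ := hS a
  rw [← hy, h]

theorem eq_zero_of_forall_mul_right_eq_zero {S : Type} [Mul S] [Zero S]
    (hS : ∀ r : S, ∃ y, r * y = r) {a : S} (h : ∀ s, a * s = 0) : a = 0 := by
  obtain ⟨y, hy⟩ := hS a
  rw [← hy, h]

theorem eq_of_forall_mul_right_eq {S : Type} [NonUnitalRing S]
    (hS : ∀ r : S, ∃ y, r * y = r) {a b : S} (h : ∀ s, a * s = b * s) : a = b :=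
  sub_eq_zero.1 (eq_zero_of_forall_mul_right_eq_zero hS fun s => by rw [sub_mul, h, sub_self])

theorem exists_right_unit {S N : Type} [NonUnitalRing S] [AddCommGroup N] (act : N → S → N)
    (add_left : ∀ a b s, act (a + b) s = act a s + act b s)
    (add_right : ∀ a s t, act a (s + t) = act a s + act a t)
    (mul : ∀ a s t, act (act a s) t = act a (s * t)) (hS : ∀ s : S, ∃ y, s * y = s)
    (hN : AddSubgroup.closure {x | ∃ a s, x = act a s} = ⊤) (n : N) :
    ∃ e, act n e = n := by
  let actBy (s : S) : N →+ N := AddMonoidHom.mk' (act · s) (add_left · · s)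
  have sub_left a b s : act (a - b) s = act a s - act b s := (actBy s).map_sub a b
  have sub_right a s t : act a (s - t) = act a s - act a t :=
    (AddMonoidHom.mk' (act a) (add_right a)).map_sub s t
  have hn : n ∈ AddSubgroup.closure {x | ∃ a s, x = act a s} := hN ▸ AddSubgroup.mem_top n
  induction hn using AddSubgroup.closure_induction with
  | mem _ hx =>
    obtain ⟨a, s, rfl⟩ := hx
    obtain ⟨y, hy⟩ := hS s
    exact ⟨y, by rw [mul, hy]⟩
  | zero => exact ⟨0, (actBy 0).map_zero⟩
  | add x y _ _ hx hy =>
    obtain ⟨e₁, he₁⟩ := hx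
    obtain ⟨e₂, he₂⟩ := hy
    -- with `(e₂ - e₂ e₁) g = e₂ - e₂ e₁`, the element `e₁ + g - e₁ g` is a unit for `x` and `y`
    obtain ⟨g, hg⟩ := hS (e₂ - e₂ * e₁)
    have hy' : act y (e₂ - e₂ * e₁) = y - act y e₁ := by rw [sub_right, ← mul, he₂]
    refine ⟨e₁ + (g - e₁ * g), ?_⟩
    rw [add_left, add_right, add_right, sub_right, sub_right, ← mul, ← mul, he₁, sub_self,
      add_zero, ← sub_left, ← hy', mul, hg, hy', add_sub_cancel]
  | neg x _ hx =>
    obtain ⟨e, he⟩ := hx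
    exact ⟨e, ((actBy e).map_neg x).trans (congrArg Neg.neg he)⟩

namespace MoritaContext

variable (c : MoritaContext R R' M M')

@[simp] theorem sRM_zero_left (m : M) : c.sRM 0 m = 0 :=
  (AddMonoidHom.mk' (c.sRM · m) (c.sRM_add_left · · m)).map_zero
@[simp] theorem sRM_zero_right (r : R) : c.sRM r 0 = 0 :=
  (AddMonoidHom.mk' (c.sRM r) (c.sRM_add_right r)).map_zero
@[simp] theorem sMR_zero_left (r' : R') : c.sMR 0 r' = 0 :=
  (AddMonoidHom.mk' (c.sMR · r') (c.sMR_add_left · · r')).map_zero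
@[simp] theorem sMR_zero_right (m : M) : c.sMR m 0 = 0 :=
  (AddMonoidHom.mk' (c.sMR m) (c.sMR_add_right m)).map_zero
@[simp] theorem sRM'_zero_left (m' : M') : c.sRM' 0 m' = 0 :=
  (AddMonoidHom.mk' (c.sRM' · m') (c.sRM'_add_left · · m')).map_zero
@[simp] theorem sRM'_zero_right (r' : R') : c.sRM' r' 0 = 0 :=
  (AddMonoidHom.mk' (c.sRM' r') (c.sRM'_add_right r')).map_zero
@[simp] theorem sMR'_zero_left (r : R) : c.sMR' 0 r = 0 :=
  (AddMonoidHom.mk' (c.sMR' · r) (c.sMR'_add_left · · r)).map_zero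
@[simp] theorem sMR'_zero_right (m' : M') : c.sMR' m' 0 = 0 :=
  (AddMonoidHom.mk' (c.sMR' m') (c.sMR'_add_right m')).map_zero
@[simp] theorem p_zero_left (m' : M') : c.p 0 m' = 0 :=
  (AddMonoidHom.mk' (c.p · m') (c.p_add_left · · m')).map_zero
@[simp] theorem p_zero_right (m : M) : c.p m 0 = 0 :=
  (AddMonoidHom.mk' (c.p m) (c.p_add_right m)).map_zero
@[simp] theorem p'_zero_left (m : M) : c.p' 0 m = 0 :=
  (AddMonoidHom.mk' (c.p' · m) (c.p'_add_left · · m)).map_zero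
@[simp] theorem p'_zero_right (m' : M') : c.p' m' 0 = 0 :=
  (AddMonoidHom.mk' (c.p' m') (c.p'_add_right m')).map_zero

theorem p'_neg_left (m' : M') (m : M) : c.p' (-m') m = -c.p' m' m :=
  (AddMonoidHom.mk' (c.p' · m) (c.p'_add_left · · m)).map_neg m'

theorem p'_sub_left (m' n' : M') (m : M) : c.p' (m' - n') m = c.p' m' m - c.p' n' m :=
  (AddMonoidHom.mk' (c.p' · m) (c.p'_add_left · · m)).map_sub m' n'

theorem eq_zero_of_forall_p'_eq_zero (hRr : ∀ r : R, ∃ y : R, r * y = r)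
    (hτ : AddSubgroup.closure {x : R | ∃ m m', x = c.p m m'} = ⊤)
    (hM'R : AddSubgroup.closure {x : M' | ∃ m' r, x = c.sMR' m' r} = ⊤)
    {w : M'} (hw : ∀ m, c.p' w m = 0) : w = 0 := by
  have hwR : ∀ r, c.sMR' w r = 0 :=
    map_eq_zero_of_closure_eq_top hτ (c.sMR'_add_right w) (by
      rintro _ ⟨m, m', rfl⟩
      rw [← c.assoc₂, hw, sRM'_zero_left])
  obtain ⟨e, he⟩ :=
    exists_right_unit c.sMR' c.sMR'_add_left c.sMR'_add_right c.sMR'_mul hRr hM'R w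
  rw [← he, hwR]

theorem eq_of_forall_p'_eq (hRr : ∀ r : R, ∃ y : R, r * y = r)
    (hτ : AddSubgroup.closure {x : R | ∃ m m', x = c.p m m'} = ⊤)
    (hM'R : AddSubgroup.closure {x : M' | ∃ m' r, x = c.sMR' m' r} = ⊤)
    {w w' : M'} (h : ∀ m, c.p' w m = c.p' w' m) : w = w' :=
  sub_eq_zero.1 (c.eq_zero_of_forall_p'_eq_zero hRr hτ hM'R fun m => by
    rw [p'_sub_left, h, sub_self])

structure CornerIsos where
  ψ : R ≃+ M
  ψ' : R' ≃+ M
  map_mul_left : ∀ r s, ψ (r * s) = c.sRM r (ψ s)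
  map_mul_right : ∀ r' s', ψ' (r' * s') = c.sMR (ψ' r') s'
  compat : ∀ r r', c.sMR (ψ r) r' = c.sRM r (ψ' r')

end MoritaContext

section LinkingAlgebra

variable (c : MoritaContext R R' M M')

theorem lmul_add_left (x y z : R × M × M' × R') :
    lmul c (x + y) z = lmul c x z + lmul c y z := by
  simp only [lmul, Prod.fst_add, Prod.snd_add, add_mul, c.p_add_left, c.sRM_add_left,
    c.sMR_add_left, c.sMR'_add_left, c.sRM'_add_left, c.p'_add_left, Prod.mk_add_mk]
  ext <;> simp only [] <;> abel

theorem lmul_add_right (x y z : R × M × M' × R') :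
    lmul c x (y + z) = lmul c x y + lmul c x z := by
  simp only [lmul, Prod.fst_add, Prod.snd_add, mul_add, c.p_add_right, c.sRM_add_right,
    c.sMR_add_right, c.sMR'_add_right, c.sRM'_add_right, c.p'_add_right, Prod.mk_add_mk]
  ext <;> simp only [] <;> abel

theorem lmul_sub_left (x y z : R × M × M' × R') :
    lmul c (x - y) z = lmul c x z - lmul c y z :=
  (AddMonoidHom.mk' (lmul c · z) (lmul_add_left c · · z)).map_sub x y

theorem lmul_sub_right (x y z : R × M × M' × R') :
    lmul c x (y - z) = lmul c x y - lmul c x z :=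
  (AddMonoidHom.mk' (lmul c x) (lmul_add_right c x)).map_sub y z

theorem lmul_assoc (x y z : R × M × M' × R') :
    lmul c (lmul c x y) z = lmul c x (lmul c y z) := by
  simp only [lmul, add_mul, mul_add, c.p_add_left, c.p_add_right, c.sRM_add_left,
    c.sRM_add_right, c.sMR_add_left, c.sMR_add_right, c.sMR'_add_left, c.sMR'_add_right,
    c.sRM'_add_left, c.sRM'_add_right, c.p'_add_left, c.p'_add_right, mul_assoc,
    c.p_left, c.p_right, c.p_balanced, c.p'_left, c.p'_right, c.p'_balanced, c.sRM_mul,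
    c.sMR_mul, c.bimod_M, c.sRM'_mul, c.sMR'_mul, c.bimod_M', c.assoc₁, c.assoc₂]
  ext <;> simp only [] <;> abel

variable {c}

def NoLeftAnnihilator (c : MoritaContext R R' M M') : Prop :=
  ∀ a, (∀ z, lmul c z a = 0) → a = 0

def NoRightAnnihilator (c : MoritaContext R R' M M') : Prop :=
  ∀ a, (∀ z, lmul c a z = 0) → a = 0

theorem NoLeftAnnihilator.eq (h : NoLeftAnnihilator c) {a b : R × M × M' × R'}
    (hab : ∀ z, lmul c z a = lmul c z b) : a = b :=
  sub_eq_zero.1 (h _ fun z => by rw [lmul_sub_right, hab, sub_self])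

theorem NoRightAnnihilator.eq (h : NoRightAnnihilator c) {a b : R × M × M' × R'}
    (hab : ∀ z, lmul c a z = lmul c b z) : a = b :=
  sub_eq_zero.1 (h _ fun z => by rw [lmul_sub_left, hab, sub_self])

def CMult.ofCompat (hl : NoLeftAnnihilator c) (hr : NoRightAnnihilator c)
    (L Rm : R × M × M' × R' → R × M × M' × R')
    (compat : ∀ x y, lmul c (Rm x) y = lmul c x (L y)) : CMult c where
  L := L
  Rm := Rm
  L_add x y := hl.eq fun z => by rw [← compat, lmul_add_right, lmul_add_right, compat, compat]
  R_add x y := hr.eq fun z => by rw [compat, lmul_add_left, lmul_add_left, compat, compat]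
  L_mul x y := hl.eq fun z => by rw [← compat, ← lmul_assoc, compat, lmul_assoc]
  R_mul x y := hr.eq fun z => by rw [compat, lmul_assoc, ← compat, lmul_assoc]
  compat := compat

end LinkingAlgebra

namespace CMult

variable {c : MoritaContext R R' M M'} (w : CMult c)

theorem Rm_inR_snd_snd (hRl : ∀ r : R, ∃ y : R, y * r = r) (r : R) :
    (w.Rm (r, 0, 0, 0)).2.2 = 0 := by
  obtain ⟨y, hy⟩ := hRl r
  have : ((r, 0, 0, 0) : R × M × M' × R') = lmul c (y, 0, 0, 0) (r, 0, 0, 0) := by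
    simp [lmul, hy]
  rw [this, w.R_mul]
  simp [lmul]

theorem L_inR'_fst (hR'l : ∀ r' : R', ∃ y : R', y * r' = r') (r' : R') :
    (w.L (0, 0, 0, r')).1 = 0 := by
  obtain ⟨y, hy⟩ := hR'l r'
  have : ((0, 0, 0, r') : R × M × M' × R') = lmul c (0, 0, 0, y) (0, 0, 0, r') := by
    simp [lmul, hy]
  rw [this, w.L_mul]
  simp [lmul]

theorem Rm_inM_add (a b : M) :
    w.Rm (0, a + b, 0, 0) = w.Rm (0, a, 0, 0) + w.Rm (0, b, 0, 0) := by
  rw [← w.R_add]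
  simp

theorem L_inM_add (a b : M) :
    w.L (0, a + b, 0, 0) = w.L (0, a, 0, 0) + w.L (0, b, 0, 0) := by
  rw [← w.L_add]
  simp

theorem Rm_inM_snd_snd (hRM : AddSubgroup.closure {x : M | ∃ r m, x = c.sRM r m} = ⊤)
    (m : M) : (w.Rm (0, m, 0, 0)).2.2 = 0 := by
  refine map_eq_zero_of_closure_eq_top hRM (f := fun m => (w.Rm (0, m, 0, 0)).2.2)
    (fun a b => by simp only [w.Rm_inM_add]; rfl) ?_ m
  rintro _ ⟨r, m, rfl⟩
  have : ((0, c.sRM r m, 0, 0) : R × M × M' × R') = lmul c (r, 0, 0, 0) (0, m, 0, 0) := by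
    simp [lmul]
  rw [this, w.R_mul]
  simp [lmul]

theorem L_inM_snd_snd_fst (hRM : AddSubgroup.closure {x : M | ∃ r m, x = c.sRM r m} = ⊤)
    (m : M) : (w.L (0, m, 0, 0)).2.2.1 = 0 := by
  refine map_eq_zero_of_closure_eq_top hRM (f := fun m => (w.L (0, m, 0, 0)).2.2.1)
    (fun a b => by simp only [w.L_inM_add]; rfl) ?_ m
  rintro _ ⟨r, m, rfl⟩
  have : ((0, c.sRM r m, 0, 0) : R × M × M' × R') = lmul c (r, 0, 0, 0) (0, m, 0, 0) := by
    simp [lmul]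
  rw [this, w.L_mul]
  simp [lmul]

end CMult

namespace CornerUV

variable {c : MoritaContext R R' M M'} {u v : CMult c}

theorem u_Rm_e11R (h : CornerUV c u v) (x : R × M × M' × R') :
    u.Rm (e11R x) = e22R (u.Rm x) := by
  rw [← h.2.1 x, h.2.2.2]

theorem u_L_e22L (h : CornerUV c u v) (x : R × M × M' × R') :
    u.L (e22L x) = e11L (u.L x) := by
  rw [← h.2.2.1 x, h.1]

theorem v_Rm_e22R (h : CornerUV c u v) (x : R × M × M' × R') :
    v.Rm (e22R x) = e11R (v.Rm x) := by
  rw [← h.2.2.2 x, h.2.1]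

theorem v_L_e11L (h : CornerUV c u v) (x : R × M × M' × R') :
    v.L (e11L x) = e22L (v.L x) := by
  rw [← h.1 x, h.2.2.1]

theorem u_Rm_inR (h : CornerUV c u v) (hRl : ∀ r : R, ∃ y : R, y * r = r) (r : R) :
    u.Rm (r, 0, 0, 0) = (0, (u.Rm (r, 0, 0, 0)).2.1, 0, 0) :=
  Prod.ext (congrArg (·.1) (h.u_Rm_e11R (r, 0, 0, 0)))
    (Prod.ext rfl (u.Rm_inR_snd_snd hRl r))

theorem u_L_inR' (h : CornerUV c u v) (hR'l : ∀ r' : R', ∃ y : R', y * r' = r') (r' : R') :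
    u.L (0, 0, 0, r') = (0, (u.L (0, 0, 0, r')).2.1, 0, 0) :=
  Prod.ext (u.L_inR'_fst hR'l r')
    (Prod.ext rfl (congrArg (·.2.2) (h.u_L_e22L (0, 0, 0, r'))))

theorem v_Rm_inM (h : CornerUV c u v)
    (hRM : AddSubgroup.closure {x : M | ∃ r m, x = c.sRM r m} = ⊤) (m : M) :
    v.Rm (0, m, 0, 0) = ((v.Rm (0, m, 0, 0)).1, 0, 0, 0) :=
  Prod.ext rfl
    (Prod.ext (congrArg (·.2.1) (h.v_Rm_e22R (0, m, 0, 0))) (v.Rm_inM_snd_snd hRM m))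

theorem v_L_inM (h : CornerUV c u v)
    (hRM : AddSubgroup.closure {x : M | ∃ r m, x = c.sRM r m} = ⊤) (m : M) :
    v.L (0, m, 0, 0) = (0, 0, 0, (v.L (0, m, 0, 0)).2.2.2) :=
  Prod.ext (congrArg (·.1) (h.v_L_e11L (0, m, 0, 0)))
    (Prod.ext (congrArg (·.2.1) (h.v_L_e11L (0, m, 0, 0)))
      (Prod.ext (v.L_inM_snd_snd_fst hRM m) rfl))

theorem bijective_Rm_inR (h : CornerUV c u v) (hRl : ∀ r : R, ∃ y : R, y * r = r)
    (hRM : AddSubgroup.closure {x : M | ∃ r m, x = c.sRM r m} = ⊤) :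
    Function.Bijective fun r : R => (u.Rm (r, 0, 0, 0)).2.1 := by
  refine Function.bijective_iff_has_inverse.mpr ⟨fun m => (v.Rm (0, m, 0, 0)).1, ?_, ?_⟩
  · intro r
    have hvu := congrArg (·.1) (h.2.1 (r, 0, 0, 0))
    rwa [h.u_Rm_inR hRl r] at hvu
  · intro m
    have huv := congrArg (·.2.1) (h.2.2.2 (0, m, 0, 0))
    rwa [h.v_Rm_inM hRM m] at huv

theorem bijective_L_inR' (h : CornerUV c u v) (hR'l : ∀ r' : R', ∃ y : R', y * r' = r')
    (hRM : AddSubgroup.closure {x : M | ∃ r m, x = c.sRM r m} = ⊤) :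
    Function.Bijective fun r' : R' => (u.L (0, 0, 0, r')).2.1 := by
  refine Function.bijective_iff_has_inverse.mpr ⟨fun m => (v.L (0, m, 0, 0)).2.2.2, ?_, ?_⟩
  · intro r'
    have hvu := congrArg (·.2.2.2) (h.2.2.1 (0, 0, 0, r'))
    rwa [h.u_L_inR' hR'l r'] at hvu
  · intro m
    have huv := congrArg (·.2.1) (h.1 (0, m, 0, 0))
    rwa [h.v_L_inM hRM m] at huv

theorem exists_isos (h : CornerUV c u v) (hRl : ∀ r : R, ∃ y : R, y * r = r)
    (hR'l : ∀ r' : R', ∃ y : R', y * r' = r')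
    (hRM : AddSubgroup.closure {x : M | ∃ r m, x = c.sRM r m} = ⊤) :
    ∃ (ψ : R → M) (ψ' : R' → M),
      Function.Bijective ψ ∧ Function.Bijective ψ' ∧
      (∀ r s : R, ψ (r + s) = ψ r + ψ s) ∧
      (∀ r' s' : R', ψ' (r' + s') = ψ' r' + ψ' s') ∧
      (∀ r s : R, ψ (r * s) = c.sRM r (ψ s)) ∧
      (∀ r' s' : R', ψ' (r' * s') = c.sMR (ψ' r') s') ∧
      (∀ (r : R) (r' : R'), c.sMR (ψ r) r' = c.sRM r (ψ' r')) := by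
  have hψ := h.u_Rm_inR hRl
  have hψ' := h.u_L_inR' hR'l
  refine ⟨_, _, h.bijective_Rm_inR hRl hRM, h.bijective_L_inR' hR'l hRM, fun r s => ?_,
    fun r' s' => ?_, fun r s => ?_, fun r' s' => ?_, fun r r' => ?_⟩
  · rw [show ((r + s, 0, 0, 0) : R × M × M' × R') = (r, 0, 0, 0) + (s, 0, 0, 0) by simp,
      u.R_add]
    rfl
  · rw [show ((0, 0, 0, r' + s') : R × M × M' × R') = (0, 0, 0, r') + (0, 0, 0, s') by simp,
      u.L_add]
    rfl
  · have hmul := u.R_mul (r, 0, 0, 0) (s, 0, 0, 0)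
    rw [hψ s] at hmul
    simpa [lmul] using congrArg (·.2.1) hmul
  · have hmul := u.L_mul (0, 0, 0, r') (0, 0, 0, s')
    rw [hψ' r'] at hmul
    simpa [lmul] using congrArg (·.2.1) hmul
  · have hcomp := u.compat (r, 0, 0, 0) (0, 0, 0, r')
    rw [hψ r, hψ' r'] at hcomp
    simpa [lmul] using congrArg (·.2.1) hcomp

end CornerUV

namespace MoritaContext.CornerIsos

variable {c : MoritaContext R R' M M'} (e : c.CornerIsos) {κ : M' → R'} {ε : R' → M'}

def θ : R ≃+ R' := e.ψ.trans e.ψ'.symm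

@[simp] theorem ψ'_θ (r : R) : e.ψ' (e.θ r) = e.ψ r := by simp [θ]

@[simp] theorem ψ_θ_symm (r' : R') : e.ψ (e.θ.symm r') = e.ψ' r' := by simp [θ]

theorem sRM_ψ_symm (m n : M) : c.sRM (e.ψ.symm m) n = c.sMR m (e.ψ'.symm n) := by
  simpa using (e.compat (e.ψ.symm m) (e.ψ'.symm n)).symm

theorem ψ'_symm_sRM (s : R) (m : M) : e.ψ'.symm (c.sRM s m) = e.θ s * e.ψ'.symm m := by
  apply e.ψ'.injective
  rw [AddEquiv.apply_symm_apply, e.map_mul_right, ψ'_θ, e.compat, AddEquiv.apply_symm_apply]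

theorem eq_zero_of_forall_sRM_eq_zero (e : c.CornerIsos) (hRl : ∀ r : R, ∃ y : R, y * r = r)
    {m : M} (h : ∀ s, c.sRM s m = 0) : m = 0 := by
  rw [← e.ψ.apply_symm_apply m,
    eq_zero_of_forall_mul_left_eq_zero hRl (a := e.ψ.symm m) fun s => e.ψ.injective (by
      rw [e.map_mul_left, AddEquiv.apply_symm_apply, h, map_zero]), map_zero]

theorem eq_of_forall_sMR_eq (e : c.CornerIsos) (hR'r : ∀ r' : R', ∃ y : R', r' * y = r')
    {m n : M} (h : ∀ s', c.sMR m s' = c.sMR n s') : m = n :=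
  e.ψ'.symm.injective <| eq_of_forall_mul_right_eq hR'r fun s' => e.ψ'.injective (by
    rw [e.map_mul_right, e.map_mul_right, AddEquiv.apply_symm_apply, AddEquiv.apply_symm_apply,
      h])

theorem exists_κ (hM'R : AddSubgroup.closure {x : M' | ∃ m' r, x = c.sMR' m' r} = ⊤) :
    ∃ κ : M' → R', ∀ m' s', κ m' * s' = c.p' m' (e.ψ' s') := by
  refine Classical.skolem (p := fun m' x => ∀ s', x * s' = c.p' m' (e.ψ' s')) |>.mp
    fun m' => ?_
  have hm' : m' ∈ AddSubgroup.closure {x : M' | ∃ m' r, x = c.sMR' m' r} :=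
    hM'R ▸ AddSubgroup.mem_top m'
  induction hm' using AddSubgroup.closure_induction with
  | mem _ hx =>
    obtain ⟨n', r, rfl⟩ := hx
    exact ⟨c.p' n' (e.ψ r), fun s' => by rw [← c.p'_right, e.compat, c.p'_balanced]⟩
  | zero => exact ⟨0, fun s' => by simp⟩
  | add _ _ _ _ hx hy =>
    obtain ⟨x, hx⟩ := hx
    obtain ⟨y, hy⟩ := hy
    exact ⟨x + y, fun s' => by rw [add_mul, hx, hy, c.p'_add_left]⟩
  | neg _ _ hx =>
    obtain ⟨x, hx⟩ := hx
    exact ⟨-x, fun s' => by rw [neg_mul, hx, c.p'_neg_left]⟩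

theorem exists_ε (hτ' : AddSubgroup.closure {x : R' | ∃ m' m, x = c.p' m' m} = ⊤) :
    ∃ ε : R' → M', ∀ r' m, c.p' (ε r') m = r' * e.ψ'.symm m := by
  refine Classical.skolem (p := fun r' w => ∀ m, c.p' w m = r' * e.ψ'.symm m) |>.mp
    fun r' => ?_
  have hr' : r' ∈ AddSubgroup.closure {x : R' | ∃ m' m, x = c.p' m' m} :=
    hτ' ▸ AddSubgroup.mem_top r'
  induction hr' using AddSubgroup.closure_induction with
  | mem _ hx =>
    obtain ⟨a', a, rfl⟩ := hx
    exact ⟨c.sMR' a' (e.ψ.symm a), fun m => by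
      rw [c.p'_balanced, sRM_ψ_symm, c.p'_right]⟩
  | zero => exact ⟨0, fun m => by simp⟩
  | add _ _ _ _ hx hy =>
    obtain ⟨x, hx⟩ := hx
    obtain ⟨y, hy⟩ := hy
    exact ⟨x + y, fun m => by rw [c.p'_add_left, hx, hy, add_mul]⟩
  | neg _ _ hx =>
    obtain ⟨x, hx⟩ := hx
    exact ⟨-x, fun m => by rw [c.p'_neg_left, hx, neg_mul]⟩

theorem θ_symm_apply (r' : R') : e.θ.symm r' = e.ψ.symm (e.ψ' r') := rfl

theorem ψ_p (hR'r : ∀ r' : R', ∃ y : R', r' * y = r')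
    (hκ : ∀ m' s', κ m' * s' = c.p' m' (e.ψ' s')) (m : M) (n' : M') :
    e.ψ (c.p m n') = c.sMR m (κ n') :=
  e.eq_of_forall_sMR_eq hR'r fun s' => by rw [e.compat, c.assoc₁, ← hκ, c.sMR_mul]

theorem p_ψ (hR'r : ∀ r' : R', ∃ y : R', r' * y = r')
    (hκ : ∀ m' s', κ m' * s' = c.p' m' (e.ψ' s')) (r : R) (n' : M') :
    c.p (e.ψ r) n' = r * e.θ.symm (κ n') :=
  e.ψ.injective (by rw [e.ψ_p hR'r hκ, e.map_mul_left, ψ_θ_symm, e.compat])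

theorem sRM_θ_symm (hκ : ∀ m' s', κ m' * s' = c.p' m' (e.ψ' s')) (n' : M') (m : M) :
    c.sRM (e.θ.symm (κ n')) m = e.ψ' (c.p' n' m) := by
  rw [θ_symm_apply, sRM_ψ_symm, ← e.map_mul_right, hκ, AddEquiv.apply_symm_apply]

theorem κ_ε (hR'r : ∀ r' : R', ∃ y : R', r' * y = r')
    (hκ : ∀ m' s', κ m' * s' = c.p' m' (e.ψ' s'))
    (hε : ∀ r' m, c.p' (ε r') m = r' * e.ψ'.symm m) (r' : R') : κ (ε r') = r' :=
  eq_of_forall_mul_right_eq hR'r fun s' => by rw [hκ, hε, AddEquiv.symm_apply_apply]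

theorem ε_κ (hRr : ∀ r : R, ∃ y : R, r * y = r)
    (hτ : AddSubgroup.closure {x : R | ∃ m m', x = c.p m m'} = ⊤)
    (hM'R : AddSubgroup.closure {x : M' | ∃ m' r, x = c.sMR' m' r} = ⊤)
    (hκ : ∀ m' s', κ m' * s' = c.p' m' (e.ψ' s'))
    (hε : ∀ r' m, c.p' (ε r') m = r' * e.ψ'.symm m) (m' : M') : ε (κ m') = m' :=
  c.eq_of_forall_p'_eq hRr hτ hM'R fun m => by rw [hε, hκ, AddEquiv.apply_symm_apply]

theorem sRM'_κ (hRr : ∀ r : R, ∃ y : R, r * y = r)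
    (hτ : AddSubgroup.closure {x : R | ∃ m m', x = c.p m m'} = ⊤)
    (hM'R : AddSubgroup.closure {x : M' | ∃ m' r, x = c.sMR' m' r} = ⊤)
    (hκ : ∀ m' s', κ m' * s' = c.p' m' (e.ψ' s')) (m' n' : M') :
    c.sRM' (κ m') n' = c.sMR' m' (e.θ.symm (κ n')) :=
  c.eq_of_forall_p'_eq hRr hτ hM'R fun m => by
    rw [c.p'_left, c.p'_balanced, e.sRM_θ_symm hκ, ← hκ]

theorem ψ_symm_mul (hR'r : ∀ r' : R', ∃ y : R', r' * y = r')
    (hκ : ∀ m' s', κ m' * s' = c.p' m' (e.ψ' s'))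
    (hε : ∀ r' m, c.p' (ε r') m = r' * e.ψ'.symm m) (m : M) (s : R) :
    e.ψ.symm m * s = c.p m (ε (e.θ s)) :=
  e.ψ.injective (by
    rw [e.ψ_p hR'r hκ, e.κ_ε hR'r hκ hε, e.map_mul_left, ← ψ'_θ, sRM_ψ_symm,
      AddEquiv.symm_apply_apply])

theorem sMR'_ε (hRr : ∀ r : R, ∃ y : R, r * y = r)
    (hτ : AddSubgroup.closure {x : R | ∃ m m', x = c.p m m'} = ⊤)
    (hM'R : AddSubgroup.closure {x : M' | ∃ m' r, x = c.sMR' m' r} = ⊤)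
    (hε : ∀ r' m, c.p' (ε r') m = r' * e.ψ'.symm m) (r' : R') (s : R) :
    c.sMR' (ε r') s = c.sRM' r' (ε (e.θ s)) :=
  c.eq_of_forall_p'_eq hRr hτ hM'R fun m => by
    rw [c.p'_balanced, hε, ψ'_symm_sRM, c.p'_left, hε]

theorem eq_zero_of_forall_p_eq_zero (hRl : ∀ r : R, ∃ y : R, y * r = r)
    (hRr : ∀ r : R, ∃ y : R, r * y = r) (hR'r : ∀ r' : R', ∃ y : R', r' * y = r')
    (hτ : AddSubgroup.closure {x : R | ∃ m m', x = c.p m m'} = ⊤)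
    (hM'R : AddSubgroup.closure {x : M' | ∃ m' r, x = c.sMR' m' r} = ⊤)
    (hκ : ∀ m' s', κ m' * s' = c.p' m' (e.ψ' s'))
    (hε : ∀ r' m, c.p' (ε r') m = r' * e.ψ'.symm m) {m' : M'} (h : ∀ n, c.p n m' = 0) :
    m' = 0 := by
  have hκm' : e.θ.symm (κ m') = 0 :=
    eq_zero_of_forall_mul_left_eq_zero hRl fun r => by rw [← e.p_ψ hR'r hκ, h]
  have hε0 : ε 0 = 0 := c.eq_zero_of_forall_p'_eq_zero hRr hτ hM'R fun m => by simp [hε]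
  rw [← e.ε_κ hRr hτ hM'R hκ hε m', e.θ.symm.map_eq_zero_iff.1 hκm', hε0]

theorem noLeftAnnihilator (hRl : ∀ r : R, ∃ y : R, y * r = r)
    (hRr : ∀ r : R, ∃ y : R, r * y = r) (hR'l : ∀ r' : R', ∃ y : R', y * r' = r')
    (hR'r : ∀ r' : R', ∃ y : R', r' * y = r')
    (hτ : AddSubgroup.closure {x : R | ∃ m m', x = c.p m m'} = ⊤)
    (hM'R : AddSubgroup.closure {x : M' | ∃ m' r, x = c.sMR' m' r} = ⊤)
    (hκ : ∀ m' s', κ m' * s' = c.p' m' (e.ψ' s'))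
    (hε : ∀ r' m, c.p' (ε r') m = r' * e.ψ'.symm m) : NoLeftAnnihilator c := by
  rintro ⟨r, m, m', r'⟩ h
  have hR := fun s => congrArg (·.1) (h (s, 0, 0, 0))
  have hM := fun s => congrArg (·.2.1) (h (s, 0, 0, 0))
  have hM' := fun n => congrArg (·.1) (h (0, n, 0, 0))
  have hR' := fun s' => congrArg (·.2.2.2) (h (0, 0, 0, s'))
  simp only [lmul, zero_mul, c.sRM_zero_left, c.sMR_zero_left, c.p_zero_left, c.p'_zero_left,
    add_zero, zero_add, Prod.fst_zero, Prod.snd_zero] at hR hM hM' hR'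
  rw [eq_zero_of_forall_mul_left_eq_zero hRl hR, e.eq_zero_of_forall_sRM_eq_zero hRl hM,
    e.eq_zero_of_forall_p_eq_zero hRl hRr hR'r hτ hM'R hκ hε hM',
    eq_zero_of_forall_mul_left_eq_zero hR'l hR']
  rfl

theorem noRightAnnihilator (e : c.CornerIsos) (hRr : ∀ r : R, ∃ y : R, r * y = r)
    (hR'r : ∀ r' : R', ∃ y : R', r' * y = r')
    (hτ : AddSubgroup.closure {x : R | ∃ m m', x = c.p m m'} = ⊤)
    (hM'R : AddSubgroup.closure {x : M' | ∃ m' r, x = c.sMR' m' r} = ⊤) :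
    NoRightAnnihilator c := by
  rintro ⟨r, m, m', r'⟩ h
  have hR := fun s => congrArg (·.1) (h (s, 0, 0, 0))
  have hM := fun s' => congrArg (·.2.1) (h (0, 0, 0, s'))
  have hM' := fun n => congrArg (·.2.2.2) (h (0, n, 0, 0))
  have hR' := fun s' => congrArg (·.2.2.2) (h (0, 0, 0, s'))
  simp only [lmul, mul_zero, c.sRM_zero_right, c.sMR_zero_right, c.p_zero_right,
    c.p'_zero_right, add_zero, zero_add, Prod.fst_zero, Prod.snd_zero] at hR hM hM' hR'
  rw [eq_zero_of_forall_mul_right_eq_zero hRr hR,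
    e.eq_of_forall_sMR_eq hR'r (m := m) (n := 0) (by simpa using hM),
    c.eq_zero_of_forall_p'_eq_zero hRr hτ hM'R hM',
    eq_zero_of_forall_mul_right_eq_zero hR'r hR']
  rfl

/- `u = [[0, ψ], [0, 0]]` and `v = [[0, 0], [ψ⁻¹, 0]]` act by
`u·[[r, m], [m', r']] = [[ψm', ψr'], [0, 0]]`, `[[r, m], [m', r']]·u = [[0, rψ], [0, m'ψ]]`,
`v·[[r, m], [m', r']] = [[0, 0], [ψ⁻¹r, ψ⁻¹m]]`, `[[r, m], [m', r']]·v = [[mψ⁻¹, 0], [r'ψ⁻¹, 0]]`,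
where `m'ψ = κ m'`, `r'ψ⁻¹ = ε r'`, `ψm' = θ⁻¹(m'ψ)` and `ψ⁻¹r = (θ r)ψ⁻¹`. -/

def uL (κ : M' → R') (x : R × M × M' × R') : R × M × M' × R' :=
  (e.θ.symm (κ x.2.2.1), e.ψ' x.2.2.2, 0, 0)

def uR (κ : M' → R') (x : R × M × M' × R') : R × M × M' × R' :=
  (0, e.ψ x.1, 0, κ x.2.2.1)

def vL (ε : R' → M') (x : R × M × M' × R') : R × M × M' × R' :=
  (0, 0, ε (e.θ x.1), e.ψ'.symm x.2.1)

def vR (ε : R' → M') (x : R × M × M' × R') : R × M × M' × R' :=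
  (e.ψ.symm x.2.1, 0, ε x.2.2.2, 0)

theorem lmul_uR (hRr : ∀ r : R, ∃ y : R, r * y = r)
    (hR'r : ∀ r' : R', ∃ y : R', r' * y = r')
    (hτ : AddSubgroup.closure {x : R | ∃ m m', x = c.p m m'} = ⊤)
    (hM'R : AddSubgroup.closure {x : M' | ∃ m' r, x = c.sMR' m' r} = ⊤)
    (hκ : ∀ m' s', κ m' * s' = c.p' m' (e.ψ' s')) (x y : R × M × M' × R') :
    lmul c (e.uR κ x) y = lmul c x (e.uL κ y) := by
  simp only [lmul, uR, uL, zero_mul, c.sRM_zero_left, c.sMR'_zero_left, c.p'_zero_left,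
    c.p_zero_right, c.sMR_zero_right, c.sRM'_zero_right, mul_zero, zero_add, add_zero,
    e.p_ψ hR'r hκ, e.compat, e.sRM'_κ hRr hτ hM'R hκ, hκ]

theorem lmul_vR (hRr : ∀ r : R, ∃ y : R, r * y = r)
    (hR'r : ∀ r' : R', ∃ y : R', r' * y = r')
    (hτ : AddSubgroup.closure {x : R | ∃ m m', x = c.p m m'} = ⊤)
    (hM'R : AddSubgroup.closure {x : M' | ∃ m' r, x = c.sMR' m' r} = ⊤)
    (hκ : ∀ m' s', κ m' * s' = c.p' m' (e.ψ' s'))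
    (hε : ∀ r' m, c.p' (ε r') m = r' * e.ψ'.symm m) (x y : R × M × M' × R') :
    lmul c (e.vR ε x) y = lmul c x (e.vL ε y) := by
  simp only [lmul, vR, vL, zero_mul, c.sRM_zero_right, c.sMR_zero_left, c.p_zero_left,
    c.p'_zero_right, c.sMR'_zero_right, c.sRM'_zero_left, mul_zero, zero_add, add_zero,
    e.ψ_symm_mul hR'r hκ hε, e.sRM_ψ_symm, e.sMR'_ε hRr hτ hM'R hε, hε]

theorem exists_cornerUV (e : c.CornerIsos) (hRl : ∀ r : R, ∃ y : R, y * r = r)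
    (hRr : ∀ r : R, ∃ y : R, r * y = r) (hR'l : ∀ r' : R', ∃ y : R', y * r' = r')
    (hR'r : ∀ r' : R', ∃ y : R', r' * y = r')
    (hτ : AddSubgroup.closure {x : R | ∃ m m', x = c.p m m'} = ⊤)
    (hτ' : AddSubgroup.closure {x : R' | ∃ m' m, x = c.p' m' m} = ⊤)
    (hM'R : AddSubgroup.closure {x : M' | ∃ m' r, x = c.sMR' m' r} = ⊤) :
    ∃ u v : CMult c, CornerUV c u v := by
  obtain ⟨κ, hκ⟩ := e.exists_κ hM'R
  obtain ⟨ε, hε⟩ := e.exists_ε hτ'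
  have hl := e.noLeftAnnihilator hRl hRr hR'l hR'r hτ hM'R hκ hε
  have hr := e.noRightAnnihilator hRr hR'r hτ hM'R
  refine ⟨.ofCompat hl hr (e.uL κ) (e.uR κ) (e.lmul_uR hRr hR'r hτ hM'R hκ),
    .ofCompat hl hr (e.vL ε) (e.vR ε) (e.lmul_vR hRr hR'r hτ hM'R hκ hε), ?_, ?_, ?_, ?_⟩ <;>
  intro x <;>
  simp [CMult.ofCompat, uL, uR, vL, vR, e11L, e11R, e22L, e22R, e.κ_ε hR'r hκ hε,
    e.ε_κ hRr hτ hM'R hκ hε]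

end MoritaContext.CornerIsos

theorem morita_uv_exist_iff_general (c : MoritaContext R R' M M')
    (hRl : ∀ r : R, ∃ y : R, y * r = r) (hRr : ∀ r : R, ∃ y : R, r * y = r)
    (hR'l : ∀ r' : R', ∃ y : R', y * r' = r') (hR'r : ∀ r' : R', ∃ y : R', r' * y = r')
    (hτ : AddSubgroup.closure {x : R | ∃ m m', x = c.p m m'} = ⊤)
    (hτ' : AddSubgroup.closure {x : R' | ∃ m' m, x = c.p' m' m} = ⊤)
    (hM'R : AddSubgroup.closure {x : M' | ∃ m' r, x = c.sMR' m' r} = ⊤)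
    (hRM : AddSubgroup.closure {x : M | ∃ r m, x = c.sRM r m} = ⊤) :
    (∃ u v : CMult c, CornerUV c u v) ↔
    (∃ (ψ : R → M) (ψ' : R' → M),
      Function.Bijective ψ ∧ Function.Bijective ψ' ∧
      (∀ r s : R, ψ (r + s) = ψ r + ψ s) ∧
      (∀ r' s' : R', ψ' (r' + s') = ψ' r' + ψ' s') ∧
      (∀ r s : R, ψ (r * s) = c.sRM r (ψ s)) ∧
      (∀ r' s' : R', ψ' (r' * s') = c.sMR (ψ' r') s') ∧
      (∀ (r : R) (r' : R'), c.sMR (ψ r) r' = c.sRM r (ψ' r'))) := by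
  constructor
  · rintro ⟨u, v, huv⟩
    exact huv.exists_isos hRl hR'l hRM
  · rintro ⟨ψ, ψ', hψ, hψ', ψ_add, ψ'_add, ψ_mul, ψ'_mul, compat⟩
    let e : c.CornerIsos :=
      { ψ := AddEquiv.ofBijective (AddMonoidHom.mk' ψ ψ_add) hψ
        ψ' := AddEquiv.ofBijective (AddMonoidHom.mk' ψ' ψ'_add) hψ'
        map_mul_left := ψ_mul
        map_mul_right := ψ'_mul
        compat := compat }
    exact e.exists_cornerUV hRl hRr hR'l hR'r hτ hτ' hM'R

/-- STATEMENT 15, Proposition 6.2: for a Morita context with `s`-unital rings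
`R`, `R'`, surjective `τ`, `τ'`, `M'R = R'M' = M'` and `MR' = RM = M`, the
linking algebra has multipliers `u, v` with `uv = e₁₁`, `vu = e₂₂` if and only
if there exist a left `R`-module isomorphism `ψ : R → M` and a right
`R'`-module isomorphism `ψ' : R' → M` with `(rψ)r' = r(ψ'r')` for all
`r ∈ R`, `r' ∈ R'`. -/
theorem morita_uv_exist_iff (c : MoritaContext R R' M M')
    (hRl : ∀ r : R, ∃ y : R, y * r = r) (hRr : ∀ r : R, ∃ y : R, r * y = r)
    (hR'l : ∀ r' : R', ∃ y : R', y * r' = r') (hR'r : ∀ r' : R', ∃ y : R', r' * y = r')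
    (hτ : AddSubgroup.closure {x : R | ∃ m m', x = c.p m m'} = ⊤)
    (hτ' : AddSubgroup.closure {x : R' | ∃ m' m, x = c.p' m' m} = ⊤)
    (hM'R : AddSubgroup.closure {x : M' | ∃ m' r, x = c.sMR' m' r} = ⊤)
    (hR'M' : AddSubgroup.closure {x : M' | ∃ r' m', x = c.sRM' r' m'} = ⊤)
    (hMR' : AddSubgroup.closure {x : M | ∃ m r', x = c.sMR m r'} = ⊤)
    (hRM : AddSubgroup.closure {x : M | ∃ r m, x = c.sRM r m} = ⊤) :
    (∃ u v : CMult c, CornerUV c u v) ↔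
    (∃ (ψ : R → M) (ψ' : R' → M),
      Function.Bijective ψ ∧ Function.Bijective ψ' ∧
      (∀ r s : R, ψ (r + s) = ψ r + ψ s) ∧
      (∀ r' s' : R', ψ' (r' + s') = ψ' r' + ψ' s') ∧
      (∀ r s : R, ψ (r * s) = c.sRM r (ψ s)) ∧
      (∀ r' s' : R', ψ' (r' * s') = c.sMR (ψ' r') s') ∧
      (∀ (r : R) (r' : R'), c.sMR (ψ r) r' = c.sRM r (ψ' r'))) :=
  morita_uv_exist_iff_general c hRl hRr hR'l hR'r hτ hτ' hM'R hRM
end
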